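/- For the Kodaira model, the first Chern–Ricci form vanishes: with A¹ the Gauduchon operator at t = 1 and Ω¹(X,Y) := −[A¹(X),A¹(Y)] − A¹(μ(X,Y)) the Chern curvature, one has ρ^{1,(1)}(X, Y) := −(1/4) tr(I ∘ Ω¹(X, Y) + I ∘ Ω¹(IX, IY)) = 0 for all X, Y ∈ ℝ⁴. -/

import Mathlib

/-!
Because the Kodaira complex structure is integrable, the Chern operator `A¹(X)` commutes with `I`:
the defect `⟪A¹(X)(IY), Z⟫ + ⟪A¹(X)Y, IZ⟫` is half of `⟪N(X,Y), IZ⟫ + ⟪N(Z,X), IY⟫`, with `N` the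
Nijenhuis tensor. By cyclicity of the trace, `tr (I ∘ [A¹X, A¹Y]) = 0` as soon as `A¹Y` commutes
with `I`, so only `-tr (I ∘ A¹(μ(X,Y)))` survives in `tr (I ∘ Ω¹(X,Y))`. For the Kodaira model the
linear form `W ↦ tr (I ∘ A¹W)` vanishes identically, which is a direct computation in the standard
basis.
-/

open scoped RealInnerProductSpace

noncomputable def e4 (i : Fin 4) : EuclideanSpace ℝ (Fin 4) :=
  EuclideanSpace.single i 1

theorem LinearMap.trace_comp_commutator_eq_zero {R M : Type*} [CommRing R] [AddCommGroup M]
    [Module R M] {J K : M →ₗ[R] M} (h : Commute J K) (L : M →ₗ[R] M) :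
    trace R M (J ∘ₗ (L ∘ₗ K - K ∘ₗ L)) = 0 := by
  rw [comp_sub, map_sub, sub_eq_zero]
  calc trace R M (J * (L * K)) = trace R M (K * (J * L)) := by
        rw [← mul_assoc, trace_mul_comm]
    _ = trace R M (J * (K * L)) := by rw [← mul_assoc, ← h.eq, mul_assoc]

section Hermitian

variable {E : Type*} [NormedAddCommGroup E] [InnerProductSpace ℝ E]
  {μ : E →ₗ[ℝ] E →ₗ[ℝ] E} {I : E →ₗ[ℝ] E}

variable (μ I) in
def nijenhuis : E →ₗ[ℝ] E →ₗ[ℝ] E :=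
  μ.compl₁₂ I I - μ - (μ ∘ₗ I).compr₂ I - (μ.compl₂ I).compr₂ I

@[simp]
theorem nijenhuis_apply (X Y : E) :
    nijenhuis μ I X Y = μ (I X) (I Y) - μ X Y - I (μ (I X) Y) - I (μ X (I Y)) :=
  rfl

variable (μ I) in
/-- `⟪S^μ(X)Y, Z⟫ + ½ F^μ(X, IY, IZ)`, i.e. `⟪A¹(X)Y, Z⟫` for the Chern operator `A¹`. -/
noncomputable def chernForm (X Y Z : E) : ℝ :=
  (-(1 / 2) * ⟪μ X Y, Z⟫ - (1 / 2) * ⟪μ Z X, Y⟫ - (1 / 2) * ⟪μ Z Y, X⟫)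
    + (1 / 2) * (-⟪μ (I X) (I (I Y)), I Z⟫ - ⟪μ (I (I Y)) (I (I Z)), X⟫
      - ⟪μ (I (I Z)) (I X), I Y⟫)

theorem chernForm_add_eq_nijenhuis (hμ : μ.IsAlt) (hII : ∀ X, I (I X) = -X)
    (hskew : ∀ X Y, ⟪I X, Y⟫ = -⟪X, I Y⟫) (X Y Z : E) :
    chernForm μ I X (I Y) Z + chernForm μ I X Y (I Z)
      = (1 / 2) * (⟪nijenhuis μ I X Y, I Z⟫ + ⟪nijenhuis μ I Z X, I Y⟫) := by
  have swap (a b c : E) : ⟪μ b a, c⟫ = -⟪μ a b, c⟫ := by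
    rw [← hμ.neg, inner_neg_left]
  simp only [chernForm, nijenhuis_apply, hII, map_neg, LinearMap.neg_apply, inner_neg_left,
    inner_neg_right, inner_sub_left, hskew, neg_neg]
  linear_combination -(1 / 2) * swap (I Y) Z X - (1 / 2) * swap (I Z) Y X

theorem commute_of_inner_eq_chernForm (hμ : μ.IsAlt) (hII : ∀ X, I (I X) = -X)
    (hskew : ∀ X Y, ⟪I X, Y⟫ = -⟪X, I Y⟫) (hN : nijenhuis μ I = 0) {C : E → E →ₗ[ℝ] E}
    (hC : ∀ X Y Z, ⟪C X Y, Z⟫ = chernForm μ I X Y Z) (X : E) : Commute I (C X) := by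
  ext Y
  refine ext_inner_right ℝ fun Z => ?_
  have h := chernForm_add_eq_nijenhuis hμ hII hskew X Y Z
  simp only [hN, LinearMap.zero_apply, inner_zero_left, add_zero, mul_zero] at h
  rw [Module.End.mul_apply, Module.End.mul_apply, hskew, hC, hC]
  linarith

theorem trace_comp_eq_neg_sum_chernForm {ι : Type*} [Fintype ι] (b : OrthonormalBasis ι ℝ E)
    (hskew : ∀ X Y, ⟪I X, Y⟫ = -⟪X, I Y⟫) {C : E → E →ₗ[ℝ] E}
    (hC : ∀ X Y Z, ⟪C X Y, Z⟫ = chernForm μ I X Y Z) (W : E) :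
    LinearMap.trace ℝ E (I ∘ₗ C W) = -∑ i, chernForm μ I W (b i) (I (b i)) := by
  rw [LinearMap.trace_eq_sum_inner _ b, ← Finset.sum_neg_distrib]
  refine Finset.sum_congr rfl fun i _ => ?_
  rw [LinearMap.comp_apply, real_inner_comm, hskew, hC]

end Hermitian

local notation "ℝ⁴" => EuclideanSpace ℝ (Fin 4)

theorem e4_eq_basisFun (i : Fin 4) : e4 i = EuclideanSpace.basisFun (Fin 4) ℝ i := by
  simp [e4]

theorem eq_sum_e4 (W : ℝ⁴) : W = ∑ i, W i • e4 i := by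
  simpa [e4_eq_basisFun] using ((EuclideanSpace.basisFun (Fin 4) ℝ).sum_repr W).symm

@[simp]
theorem inner_e4 (i j : Fin 4) : ⟪e4 i, e4 j⟫ = if i = j then 1 else 0 := by
  simp [e4, EuclideanSpace.inner_single_left]

@[simp]
theorem norm_e4 (i : Fin 4) : ‖e4 i‖ = 1 := by
  simp [e4]

structure IsKodairaComplexStructure (I : ℝ⁴ →ₗ[ℝ] ℝ⁴) : Prop where
  apply_e0 : I (e4 0) = e4 1
  apply_e1 : I (e4 1) = -e4 0
  apply_e2 : I (e4 2) = e4 3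
  apply_e3 : I (e4 3) = -e4 2

namespace IsKodairaComplexStructure

variable {I : ℝ⁴ →ₗ[ℝ] ℝ⁴}

theorem apply_apply (hI : IsKodairaComplexStructure I) (X : ℝ⁴) : I (I X) = -X := by
  suffices I ∘ₗ I = -LinearMap.id from congr($this X)
  refine (EuclideanSpace.basisFun (Fin 4) ℝ).toBasis.ext fun i => ?_
  rw [OrthonormalBasis.coe_toBasis, ← e4_eq_basisFun]
  fin_cases i <;> simp [hI.apply_e0, hI.apply_e1, hI.apply_e2, hI.apply_e3]

theorem inner_apply_left (hI : IsKodairaComplexStructure I) (X Y : ℝ⁴) :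
    ⟪I X, Y⟫ = -⟪X, I Y⟫ := by
  rw [eq_neg_iff_add_eq_zero]
  suffices (innerₗ ℝ⁴).compl₁₂ I LinearMap.id + (innerₗ ℝ⁴).compl₂ I = 0 from congr($this X Y)
  refine LinearMap.ext_basis (EuclideanSpace.basisFun (Fin 4) ℝ).toBasis
    (EuclideanSpace.basisFun (Fin 4) ℝ).toBasis fun i j => ?_
  rw [OrthonormalBasis.coe_toBasis, ← e4_eq_basisFun, ← e4_eq_basisFun]
  fin_cases i <;> fin_cases j <;> simp [hI.apply_e0, hI.apply_e1, hI.apply_e2, hI.apply_e3]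

end IsKodairaComplexStructure

structure IsKodairaBracket (r v α β : ℝ) (μ : ℝ⁴ →ₗ[ℝ] ℝ⁴ →ₗ[ℝ] ℝ⁴) : Prop where
  alt : μ.IsAlt
  apply_e0_e1 : μ (e4 0) (e4 1) = (α / r) • e4 0 - (β / r) • e4 1 - (v / r ^ 2) • e4 3
  apply_e0_e2 : μ (e4 0) (e4 2) = -(α ^ 2 / v) • e4 0 + (α * β / v) • e4 1 + (α / r) • e4 3
  apply_e0_e3 : μ (e4 0) (e4 3) = -(α * β / v) • e4 0 + (β ^ 2 / v) • e4 1 + (β / r) • e4 3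
  apply_e1_e2 : μ (e4 1) (e4 2) = (α * β / v) • e4 0 - (β ^ 2 / v) • e4 1 - (β / r) • e4 3
  apply_e1_e3 : μ (e4 1) (e4 3) = -(α ^ 2 / v) • e4 0 + (α * β / v) • e4 1 + (α / r) • e4 3
  apply_e2_e3 : μ (e4 2) (e4 3) =
    ((α ^ 2 + β ^ 2) * α * r / v ^ 2) • e4 0 - ((α ^ 2 + β ^ 2) * β * r / v ^ 2) • e4 1
      - ((α ^ 2 + β ^ 2) / v) • e4 3

namespace IsKodairaBracket

variable {r v α β : ℝ} {μ : ℝ⁴ →ₗ[ℝ] ℝ⁴ →ₗ[ℝ] ℝ⁴} {I : ℝ⁴ →ₗ[ℝ] ℝ⁴}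

theorem nijenhuis_eq_zero (hμ : IsKodairaBracket r v α β μ) (hI : IsKodairaComplexStructure I) :
    nijenhuis μ I = 0 := by
  have swap (X Y : ℝ⁴) : μ Y X = -μ X Y := (hμ.alt.neg X Y).symm
  refine LinearMap.ext_basis (EuclideanSpace.basisFun (Fin 4) ℝ).toBasis
    (EuclideanSpace.basisFun (Fin 4) ℝ).toBasis fun i j => ?_
  rw [OrthonormalBasis.coe_toBasis, ← e4_eq_basisFun, ← e4_eq_basisFun]
  fin_cases i <;> fin_cases j <;>
    simp [hI.apply_e0, hI.apply_e1, hI.apply_e2, hI.apply_e3, hμ.alt.self_eq_zero, hμ.apply_e0_e1,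
      hμ.apply_e0_e2, hμ.apply_e0_e3, hμ.apply_e1_e2, hμ.apply_e1_e3, hμ.apply_e2_e3,
      swap (e4 0) (e4 1), swap (e4 0) (e4 2), swap (e4 0) (e4 3), swap (e4 1) (e4 2),
      swap (e4 1) (e4 3), swap (e4 2) (e4 3)] <;>
    module

theorem trace_comp_eq_zero (hμ : IsKodairaBracket r v α β μ) (hI : IsKodairaComplexStructure I)
    {C : ℝ⁴ → ℝ⁴ →ₗ[ℝ] ℝ⁴} (hC : ∀ X Y Z, ⟪C X Y, Z⟫ = chernForm μ I X Y Z) (W : ℝ⁴) :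
    LinearMap.trace ℝ ℝ⁴ (I ∘ₗ C W) = 0 := by
  have swap (X Y : ℝ⁴) : μ Y X = -μ X Y := (hμ.alt.neg X Y).symm
  rw [trace_comp_eq_neg_sum_chernForm (EuclideanSpace.basisFun (Fin 4) ℝ) hI.inner_apply_left hC,
    neg_eq_zero]
  simp only [← e4_eq_basisFun]
  rw [eq_sum_e4 W]
  simp [Fin.sum_univ_four, chernForm, hI.apply_e0, hI.apply_e1, hI.apply_e2,
    hI.apply_e3, hI.apply_apply, hμ.alt.self_eq_zero, hμ.apply_e0_e1, hμ.apply_e0_e2, hμ.apply_e0_e3,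
    hμ.apply_e1_e2, hμ.apply_e1_e3, hμ.apply_e2_e3, swap (e4 0) (e4 1), swap (e4 0) (e4 2),
    swap (e4 0) (e4 3), swap (e4 1) (e4 2), swap (e4 1) (e4 3), swap (e4 2) (e4 3),
    inner_add_left, inner_add_right, inner_smul_left, inner_smul_right, inner_sub_left]
  ring

end IsKodairaBracket

theorem stmt_16_general (r v α β : ℝ)
    (μ : EuclideanSpace ℝ (Fin 4) →ₗ[ℝ]
      EuclideanSpace ℝ (Fin 4) →ₗ[ℝ] EuclideanSpace ℝ (Fin 4))
    (hμalt : ∀ X, μ X X = 0)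
    (h01 : μ (e4 0) (e4 1) =
      (α / r) • e4 0 - (β / r) • e4 1 - (v / r ^ 2) • e4 3)
    (h02 : μ (e4 0) (e4 2) =
      -(α ^ 2 / v) • e4 0 + (α * β / v) • e4 1 + (α / r) • e4 3)
    (h03 : μ (e4 0) (e4 3) =
      -(α * β / v) • e4 0 + (β ^ 2 / v) • e4 1 + (β / r) • e4 3)
    (h12 : μ (e4 1) (e4 2) =
      (α * β / v) • e4 0 - (β ^ 2 / v) • e4 1 - (β / r) • e4 3)
    (h13 : μ (e4 1) (e4 3) =
      -(α ^ 2 / v) • e4 0 + (α * β / v) • e4 1 + (α / r) • e4 3)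
    (h23 : μ (e4 2) (e4 3) =
      ((α ^ 2 + β ^ 2) * α * r / v ^ 2) • e4 0
        - ((α ^ 2 + β ^ 2) * β * r / v ^ 2) • e4 1
        - ((α ^ 2 + β ^ 2) / v) • e4 3)
    (I : EuclideanSpace ℝ (Fin 4) →ₗ[ℝ] EuclideanSpace ℝ (Fin 4))
    (hI0 : I (e4 0) = e4 1) (hI1 : I (e4 1) = -e4 0)
    (hI2 : I (e4 2) = e4 3) (hI3 : I (e4 3) = -e4 2)
    -- the Levi-Civita operator `S^μ`
    (S : EuclideanSpace ℝ (Fin 4) →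
      (EuclideanSpace ℝ (Fin 4) →ₗ[ℝ] EuclideanSpace ℝ (Fin 4)))
    (hS : ∀ X Y Z, ⟪S X Y, Z⟫ =
      -(1 / 2) * ⟪μ X Y, Z⟫ - (1 / 2) * ⟪μ Z X, Y⟫ - (1 / 2) * ⟪μ Z Y, X⟫)
    -- the `3`-form `F^μ`
    (F : EuclideanSpace ℝ (Fin 4) → EuclideanSpace ℝ (Fin 4) →
      EuclideanSpace ℝ (Fin 4) → ℝ)
    (hF : ∀ X Y Z, F X Y Z =
      -⟪μ (I X) (I Y), Z⟫ - ⟪μ (I Y) (I Z), X⟫ - ⟪μ (I Z) (I X), Y⟫)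
    -- the Gauduchon operator `A^t` (integrable case)
    (A : ℝ → EuclideanSpace ℝ (Fin 4) →
      (EuclideanSpace ℝ (Fin 4) →ₗ[ℝ] EuclideanSpace ℝ (Fin 4)))
    (hA : ∀ (t : ℝ) (X Y Z : EuclideanSpace ℝ (Fin 4)),
      ⟪A t X Y, Z⟫ = ⟪S X Y, Z⟫ + ((t + 1) / 4) * F X (I Y) (I Z)
        + ((t - 1) / 4) * F X Y Z) :
    let Ω : ℝ → EuclideanSpace ℝ (Fin 4) → EuclideanSpace ℝ (Fin 4) →
        (EuclideanSpace ℝ (Fin 4) →ₗ[ℝ] EuclideanSpace ℝ (Fin 4)) :=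
      fun t X Y => -((A t X) ∘ₗ (A t Y) - (A t Y) ∘ₗ (A t X)) - A t (μ X Y)
    ∀ X Y : EuclideanSpace ℝ (Fin 4),
      -(1 / 4) * LinearMap.trace ℝ (EuclideanSpace ℝ (Fin 4))
        (I ∘ₗ Ω 1 X Y + I ∘ₗ Ω 1 (I X) (I Y)) = 0 := by
  intro Ω X Y
  have hμK : IsKodairaBracket r v α β μ := ⟨hμalt, h01, h02, h03, h12, h13, h23⟩
  have hIK : IsKodairaComplexStructure I := ⟨hI0, hI1, hI2, hI3⟩
  have hC : ∀ X Y Z, ⟪A 1 X Y, Z⟫ = chernForm μ I X Y Z := fun X Y Z => by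
    rw [hA, hS, hF, hF, chernForm]
    ring
  have hcomm : ∀ X, Commute I (A 1 X) :=
    commute_of_inner_eq_chernForm hμalt hIK.apply_apply hIK.inner_apply_left
      (hμK.nijenhuis_eq_zero hIK) hC
  have hρ : ∀ P Q, LinearMap.trace ℝ _ (I ∘ₗ Ω 1 P Q) = 0 := fun P Q => by
    rw [LinearMap.comp_sub, LinearMap.comp_neg, map_sub, map_neg,
      LinearMap.trace_comp_commutator_eq_zero (hcomm Q), hμK.trace_comp_eq_zero hIK hC,
      neg_zero, sub_zero]
  rw [map_add, hρ, hρ]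
  ring

/-- For the Kodaira model, the first Chern–Ricci form vanishes: with
`A¹` the Gauduchon operator at `t = 1` and `Ω¹(X,Y) = −[A¹(X),A¹(Y)] − A¹(μ(X,Y))`
the Chern curvature, one has
`ρ^{1,(1)}(X, Y) = −(1/4) tr(I ∘ Ω¹(X, Y) + I ∘ Ω¹(IX, IY)) = 0` for all `X, Y`. -/
theorem stmt_16 (r v α β : ℝ) (hr : 0 < r) (hv : 0 < v)
    (μ : EuclideanSpace ℝ (Fin 4) →ₗ[ℝ]
      EuclideanSpace ℝ (Fin 4) →ₗ[ℝ] EuclideanSpace ℝ (Fin 4))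
    (hμalt : ∀ X, μ X X = 0)
    (h01 : μ (e4 0) (e4 1) =
      (α / r) • e4 0 - (β / r) • e4 1 - (v / r ^ 2) • e4 3)
    (h02 : μ (e4 0) (e4 2) =
      -(α ^ 2 / v) • e4 0 + (α * β / v) • e4 1 + (α / r) • e4 3)
    (h03 : μ (e4 0) (e4 3) =
      -(α * β / v) • e4 0 + (β ^ 2 / v) • e4 1 + (β / r) • e4 3)
    (h12 : μ (e4 1) (e4 2) =
      (α * β / v) • e4 0 - (β ^ 2 / v) • e4 1 - (β / r) • e4 3)
    (h13 : μ (e4 1) (e4 3) =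
      -(α ^ 2 / v) • e4 0 + (α * β / v) • e4 1 + (α / r) • e4 3)
    (h23 : μ (e4 2) (e4 3) =
      ((α ^ 2 + β ^ 2) * α * r / v ^ 2) • e4 0
        - ((α ^ 2 + β ^ 2) * β * r / v ^ 2) • e4 1
        - ((α ^ 2 + β ^ 2) / v) • e4 3)
    (I : EuclideanSpace ℝ (Fin 4) →ₗ[ℝ] EuclideanSpace ℝ (Fin 4))
    (hI0 : I (e4 0) = e4 1) (hI1 : I (e4 1) = -e4 0)
    (hI2 : I (e4 2) = e4 3) (hI3 : I (e4 3) = -e4 2)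
    -- the Levi-Civita operator `S^μ`
    (S : EuclideanSpace ℝ (Fin 4) →
      (EuclideanSpace ℝ (Fin 4) →ₗ[ℝ] EuclideanSpace ℝ (Fin 4)))
    (hS : ∀ X Y Z, ⟪S X Y, Z⟫ =
      -(1 / 2) * ⟪μ X Y, Z⟫ - (1 / 2) * ⟪μ Z X, Y⟫ - (1 / 2) * ⟪μ Z Y, X⟫)
    -- the `3`-form `F^μ`
    (F : EuclideanSpace ℝ (Fin 4) → EuclideanSpace ℝ (Fin 4) →
      EuclideanSpace ℝ (Fin 4) → ℝ)
    (hF : ∀ X Y Z, F X Y Z =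
      -⟪μ (I X) (I Y), Z⟫ - ⟪μ (I Y) (I Z), X⟫ - ⟪μ (I Z) (I X), Y⟫)
    -- the Gauduchon operator `A^t` (integrable case)
    (A : ℝ → EuclideanSpace ℝ (Fin 4) →
      (EuclideanSpace ℝ (Fin 4) →ₗ[ℝ] EuclideanSpace ℝ (Fin 4)))
    (hA : ∀ (t : ℝ) (X Y Z : EuclideanSpace ℝ (Fin 4)),
      ⟪A t X Y, Z⟫ = ⟪S X Y, Z⟫ + ((t + 1) / 4) * F X (I Y) (I Z)
        + ((t - 1) / 4) * F X Y Z) :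
    let Ω : ℝ → EuclideanSpace ℝ (Fin 4) → EuclideanSpace ℝ (Fin 4) →
        (EuclideanSpace ℝ (Fin 4) →ₗ[ℝ] EuclideanSpace ℝ (Fin 4)) :=
      fun t X Y => -((A t X) ∘ₗ (A t Y) - (A t Y) ∘ₗ (A t X)) - A t (μ X Y)
    ∀ X Y : EuclideanSpace ℝ (Fin 4),
      -(1 / 4) * LinearMap.trace ℝ (EuclideanSpace ℝ (Fin 4))
        (I ∘ₗ Ω 1 X Y + I ∘ₗ Ω 1 (I X) (I Y)) = 0 :=
  stmt_16_general r v α β μ hμalt h01 h02 h03 h12 h13 h23 I hI0 hI1 hI2 hI3 S hS F hF A hA
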